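/- (Validity of the multilayered bounds for stayers.) Under the multilayered sample selection model with Assumption RCT, let R be a collection of constraints on response-type probability vectors, and suppose the true vector (P(T=(d,d')))_{(d,d')} belongs to Θ_I(R). Fix d ∈ {1,…,K} with P(T=(d,d)) > 0, P(D=d | Z=1) > 0, P(D=d | Z=0) > 0, and suppose γ̲^{1,r}_{(d,d)} > 0 and γ̲^{0,r}_{(d,d)} > 0. Let F_{Y|D=d,Z=z} denote the conditional CDF of Y given {D=d, Z=z}. Then: E[F^{-1}_{Y|D=d,Z=1}(U) | U ≤ γ̲^{1,r}_{(d,d)}] − E[F^{-1}_{Y|D=d,Z=0}(U) | U ≥ 1 − γ̲^{0,r}_{(d,d)}] ≤ LCDE(d | (d,d)) ≤ E[F^{-1}_{Y|D=d,Z=1}(U) | U ≥ 1 − γ̲^{1,r}_{(d,d)}] − E[F^{-1}_{Y|D=d,Z=0}(U) | U ≤ γ̲^{0,r}_{(d,d)}]. -/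

import Mathlib

open MeasureTheory ProbabilityTheory

/-- Realized layer `D = D_1·Z + D_0·(1−Z)` (for `Z` valued in `{0,1}`). -/
def Dreal {Ω : Type*} (Z D0 D1 : Ω → ℕ) (ω : Ω) : ℕ :=
  D1 ω * Z ω + D0 ω * (1 - Z ω)

/-- Realized outcome `Y = Σ_{d=1}^K [Y_{1,d}·Z + Y_{0,d}·(1−Z)]·1{D=d}`. -/
noncomputable def Yreal {Ω : Type*} (K : ℕ) (Z D0 D1 : Ω → ℕ) (Y : ℕ → ℕ → Ω → ℝ)
    (ω : Ω) : ℝ :=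
  ∑ d ∈ Finset.Icc 1 K,
    (Y 1 d ω * (Z ω : ℝ) + Y 0 d ω * (1 - (Z ω : ℝ))) *
      (if Dreal Z D0 D1 ω = d then 1 else 0)

/-- Assumption RCT: the σ-algebra generated by the potential outcomes
`Y_{z,d}` (for `z ∈ {0,1}`, `d ∈ {1,…,K}`) together with `D_0, D_1` is
independent of (the σ-algebra generated by) `Z`. -/
def RCT {Ω : Type*} [MeasurableSpace Ω] (P : MeasureTheory.Measure Ω) (K : ℕ)
    (Y : ℕ → ℕ → Ω → ℝ) (D0 D1 Z : Ω → ℕ) : Prop :=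
  ProbabilityTheory.Indep
    ((⨆ z ∈ ({0, 1} : Set ℕ), ⨆ d ∈ Set.Icc 1 K, MeasurableSpace.comap (Y z d) inferInstance)
      ⊔ MeasurableSpace.comap D0 inferInstance ⊔ MeasurableSpace.comap D1 inferInstance)
    (MeasurableSpace.comap Z inferInstance) P

/-- CDF of a random variable `W` under a measure `μ`. -/
noncomputable def cdfOf {Ω : Type*} [MeasurableSpace Ω] (μ : MeasureTheory.Measure Ω)
    (W : Ω → ℝ) (w : ℝ) : ℝ :=
  (μ {ω | W ω ≤ w}).toReal

/-- Quantile function `F⁻¹(u) = inf {w : F(w) ≥ u}`. -/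
noncomputable def quantileFn (F : ℝ → ℝ) (u : ℝ) : ℝ := sInf {w | u ≤ F w}

/-- Lower truncated mean `E[F⁻¹(U) | U ≤ γ]` for `U` uniform on `[0,1]`,
written as `γ⁻¹ ∫_{(0,γ]} F⁻¹(u) du`. -/
noncomputable def lowerTrunc (F : ℝ → ℝ) (γ : ℝ) : ℝ :=
  γ⁻¹ * ∫ u in Set.Ioc (0 : ℝ) γ, quantileFn F u

/-- Upper truncated mean `E[F⁻¹(U) | U ≥ 1 − γ]` for `U` uniform on `[0,1]`,
written as `γ⁻¹ ∫_{[1−γ,1]} F⁻¹(u) du`. -/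
noncomputable def upperTrunc (F : ℝ → ℝ) (γ : ℝ) : ℝ :=
  γ⁻¹ * ∫ u in Set.Ico (1 - γ) (1 : ℝ), quantileFn F u

/-- Propensity score `P(D = d | Z = z)` as a real number. -/
noncomputable def propScore {Ω : Type*} [MeasurableSpace Ω] (P : MeasureTheory.Measure Ω)
    (Z D0 D1 : Ω → ℕ) (d z : ℕ) : ℝ :=
  ((P[|{ω | Z ω = z}]) {ω | Dreal Z D0 D1 ω = d}).toReal

/-- Identified set `Θ_I(R)` of response-type probability vectors: nonnegative
vectors on `{0,…,K}²` summing to one, matching both propensity-score margins,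
and satisfying the restrictions `R`. -/
def ThetaI {Ω : Type*} [MeasurableSpace Ω] (P : MeasureTheory.Measure Ω) (K : ℕ)
    (Z D0 D1 : Ω → ℕ) (R : (ℕ × ℕ → ℝ) → Prop) : Set (ℕ × ℕ → ℝ) :=
  {p | (∀ t ∈ Finset.range (K + 1) ×ˢ Finset.range (K + 1), 0 ≤ p t) ∧
       (∑ t ∈ Finset.range (K + 1) ×ˢ Finset.range (K + 1), p t = 1) ∧
       (∀ d ≤ K, propScore P Z D0 D1 d 1 = ∑ d' ∈ Finset.range (K + 1), p (d', d)) ∧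
       (∀ d ≤ K, propScore P Z D0 D1 d 0 = ∑ d' ∈ Finset.range (K + 1), p (d, d')) ∧
       R p}

/-- `p̲^r_t`: the infimum of `p t` over the identified set `Θ_I(R)`. -/
noncomputable def pbar {Ω : Type*} [MeasurableSpace Ω] (P : MeasureTheory.Measure Ω)
    (K : ℕ) (Z D0 D1 : Ω → ℕ) (R : (ℕ × ℕ → ℝ) → Prop) (t : ℕ × ℕ) : ℝ :=
  sInf ((fun p => p t) '' ThetaI P K Z D0 D1 R)

/-- The conditional CDF `F_{Y|D=d,Z=z}` of the realized outcome. -/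
noncomputable def FYcond {Ω : Type*} [MeasurableSpace Ω] (P : MeasureTheory.Measure Ω)
    (K : ℕ) (Z D0 D1 : Ω → ℕ) (Y : ℕ → ℕ → Ω → ℝ) (d z : ℕ) : ℝ → ℝ :=
  cdfOf (P[|{ω | Dreal Z D0 D1 ω = d ∧ Z ω = z}]) (Yreal K Z D0 D1 Y)

/-!
Under RCT, conditioning on `{D = d, Z = z}` amounts to conditioning on `{D_z = d}`, so
`F_{Y|D=d,Z=z}` is the law of `Y_{z,d}` given `D_z = d`. The stayers `{T = (d, d)}` form a
subpopulation of `{D_z = d}` of relative size at least `γ̲^{z,r}`, because the true response-type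
vector lies in `Θ_I(R)` and so `p̲^r_{(d,d)} ≤ P(T = (d, d))`.

It remains to bound the mean of an integrable `W` over an event `S` of probability `s ≥ γ`.
For every `c`, `W ≥ c - (c - W)⁺` gives `E[W | S] ≥ c - E[(c - W)⁺] / s ≥ c - E[(c - W)⁺] / γ`.
By the quantile transform (`F⁻¹(U)` has the law of `W`), the choice `c = F⁻¹(γ)` turns the right
side into `E[F⁻¹(U) | U ≤ γ]`; symmetrically `E[W | S] ≤ E[F⁻¹(U) | U ≥ 1 - γ]`. Subtracting the
bounds for `z = 1` and `z = 0` gives the theorem.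
-/

open Set Filter Topology

section Quantile

variable (μ : Measure ℝ) {u w : ℝ}

lemma bddBelow_setOf_le_cdf (hu : 0 < u) : BddBelow {w | u ≤ cdf μ w} := by
  obtain ⟨x, hx⟩ := ((tendsto_cdf_atBot μ).eventually (gt_mem_nhds hu)).exists_forall_of_atBot
  exact ⟨x, fun v hv => le_of_not_gt fun hvx => (hx v hvx.le).not_ge hv⟩

lemma nonempty_setOf_le_cdf (hu : u < 1) : {w | u ≤ cdf μ w}.Nonempty :=
  ((tendsto_cdf_atTop μ).eventually (lt_mem_nhds hu)).exists.imp fun _ h => h.le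

lemma quantileFn_cdf_le_iff (hu0 : 0 < u) (hu1 : u < 1) :
    quantileFn (cdf μ) u ≤ w ↔ u ≤ cdf μ w := by
  refine ⟨fun h => ?_, fun h => csInf_le (bddBelow_setOf_le_cdf μ hu0) h⟩
  have hright : Tendsto (cdf μ) (𝓝[>] w) (𝓝 (cdf μ w)) :=
    ((cdf μ).right_continuous w).mono Ioi_subset_Ici_self
  refine ge_of_tendsto hright ?_
  filter_upwards [self_mem_nhdsWithin] with x (hx : w < x)
  obtain ⟨v, hv, hvx⟩ := (csInf_lt_iff (bddBelow_setOf_le_cdf μ hu0)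
    (nonempty_setOf_le_cdf μ hu1)).mp (h.trans_lt hx)
  exact hv.trans (monotone_cdf μ hvx.le)

lemma monotoneOn_quantileFn_cdf : MonotoneOn (quantileFn (cdf μ)) (Ioo 0 1) :=
  fun _ hu _ hv huv => (quantileFn_cdf_le_iff μ hu.1 hu.2).mpr <|
    huv.trans ((quantileFn_cdf_le_iff μ hv.1 hv.2).mp le_rfl)

lemma aemeasurable_quantileFn_cdf :
    AEMeasurable (quantileFn (cdf μ)) (volume.restrict (Ioo 0 1)) :=
  aemeasurable_restrict_of_monotoneOn measurableSet_Ioo (monotoneOn_quantileFn_cdf μ)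

variable [IsProbabilityMeasure μ]

lemma map_quantileFn_cdf_volume :
    (volume.restrict (Ioo 0 1)).map (quantileFn (cdf μ)) = μ := by
  refine Measure.ext_of_Iic _ _ fun w => ?_
  rw [Measure.map_apply_of_aemeasurable (aemeasurable_quantileFn_cdf μ) measurableSet_Iic,
    Measure.restrict_apply' measurableSet_Ioo, ← ofReal_cdf]
  have hset : quantileFn (cdf μ) ⁻¹' Iic w ∩ Ioo 0 1 = Iic (cdf μ w) ∩ Ioo 0 1 := by
    ext u
    simp only [mem_inter_iff, mem_preimage, mem_Iic, and_congr_left_iff]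
    exact fun hu => quantileFn_cdf_le_iff μ hu.1 hu.2
  rw [hset, measure_congr ((ae_eq_refl (Iic (cdf μ w))).inter Ioo_ae_eq_Ioc),
    Iic_inter_Ioc_of_le (cdf_le_one μ w)]
  simp [Real.volume_Ioc]

lemma integral_comp_quantileFn_cdf {f : ℝ → ℝ} (hf : AEStronglyMeasurable f μ) :
    ∫ u in Ioo 0 1, f (quantileFn (cdf μ) u) = ∫ x, f x ∂μ := by
  rw [← integral_map (aemeasurable_quantileFn_cdf μ) ((map_quantileFn_cdf_volume μ).symm ▸ hf),
    map_quantileFn_cdf_volume]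

lemma integrableOn_quantileFn_cdf (hμ : Integrable id μ) :
    IntegrableOn (quantileFn (cdf μ)) (Ioo 0 1) := by
  rw [← map_quantileFn_cdf_volume μ] at hμ
  exact (integrable_map_measure hμ.1 (aemeasurable_quantileFn_cdf μ)).mp hμ

lemma setIntegral_Ioc_quantileFn_cdf {a : ℝ} (hμ : Integrable id μ) (ha0 : 0 < a) (ha1 : a < 1) :
    ∫ u in Ioc 0 a, quantileFn (cdf μ) u
      = a * quantileFn (cdf μ) a - ∫ x, max (quantileFn (cdf μ) a - x) 0 ∂μ := by
  set q := quantileFn (cdf μ)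
  have hsub : Ioc 0 a ⊆ Ioo 0 1 := fun u hu => ⟨hu.1, hu.2.trans_lt ha1⟩
  have hpos : EqOn (fun u => max (q a - q u) 0) ((Ioc 0 a).indicator fun u => q a - q u)
      (Ioo 0 1) := by
    intro u hu
    dsimp only
    by_cases hua : u ≤ a
    · rw [indicator_of_mem (show u ∈ Ioc 0 a from ⟨hu.1, hua⟩), max_eq_left (sub_nonneg.2 <|
        monotoneOn_quantileFn_cdf μ hu ⟨ha0, ha1⟩ hua)]
    · rw [indicator_of_notMem fun h => hua h.2, max_eq_right (sub_nonpos.2 <|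
        monotoneOn_quantileFn_cdf μ ⟨ha0, ha1⟩ hu (not_le.1 hua).le)]
  have hint : IntegrableOn q (Ioc 0 a) := (integrableOn_quantileFn_cdf μ hμ).mono_set hsub
  rw [← integral_comp_quantileFn_cdf μ (f := fun x => max (q a - x) 0) (by fun_prop),
    setIntegral_congr_fun measurableSet_Ioo hpos, integral_indicator measurableSet_Ioc,
    Measure.restrict_restrict measurableSet_Ioc, inter_eq_left.2 hsub,
    integral_sub (integrable_const _) hint]
  simp [ha0.le]

lemma setIntegral_Ico_quantileFn_cdf {a : ℝ} (hμ : Integrable id μ) (ha0 : 0 < a) (ha1 : a < 1) :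
    ∫ u in Ico a 1, quantileFn (cdf μ) u
      = (1 - a) * quantileFn (cdf μ) a + ∫ x, max (x - quantileFn (cdf μ) a) 0 ∂μ := by
  set q := quantileFn (cdf μ)
  have hsub : Ico a 1 ⊆ Ioo 0 1 := fun u hu => ⟨ha0.trans_le hu.1, hu.2⟩
  have hpos : EqOn (fun u => max (q u - q a) 0) ((Ico a 1).indicator fun u => q u - q a)
      (Ioo 0 1) := by
    intro u hu
    dsimp only
    by_cases hau : a ≤ u
    · rw [indicator_of_mem (show u ∈ Ico a 1 from ⟨hau, hu.2⟩), max_eq_left (sub_nonneg.2 <|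
        monotoneOn_quantileFn_cdf μ ⟨ha0, ha1⟩ hu hau)]
    · rw [indicator_of_notMem fun h => hau h.1, max_eq_right (sub_nonpos.2 <|
        monotoneOn_quantileFn_cdf μ hu ⟨ha0, ha1⟩ (not_le.1 hau).le)]
  have hint : IntegrableOn q (Ico a 1) := (integrableOn_quantileFn_cdf μ hμ).mono_set hsub
  rw [← integral_comp_quantileFn_cdf μ (f := fun x => max (x - q a) 0) (by fun_prop),
    setIntegral_congr_fun measurableSet_Ioo hpos, integral_indicator measurableSet_Ico,
    Measure.restrict_restrict measurableSet_Ico, inter_eq_left.2 hsub,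
    integral_sub hint (integrable_const _)]
  simp [ha1.le]

lemma integral_quantileFn_cdf : ∫ u in Ioo 0 1, quantileFn (cdf μ) u = ∫ x, x ∂μ :=
  integral_comp_quantileFn_cdf μ aestronglyMeasurable_id

end Quantile

section ConditionalMean

variable {Ω : Type*} [MeasurableSpace Ω] {η : Measure Ω} {W : Ω → ℝ} {S : Set Ω}

lemma cdfOf_eq_cdf_map [IsProbabilityMeasure η] (hW : AEMeasurable W η) :
    cdfOf η W = cdf (η.map W) := by
  have := Measure.isProbabilityMeasure_map hW
  ext w
  rw [cdf_eq_real, measureReal_def, Measure.map_apply_of_aemeasurable hW measurableSet_Iic]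
  rfl

lemma cond_eq_self_of_measureReal_eq_one [IsProbabilityMeasure η] (hS : MeasurableSet S)
    (h : η.real S = 1) : η[|S] = η := by
  have hS1 : η S = 1 := by
    rw [measureReal_def, ENNReal.toReal_eq_one_iff] at h
    exact h
  rw [ProbabilityTheory.cond, hS1, inv_one, one_smul]
  exact Measure.restrict_eq_self_of_ae_mem (prob_compl_eq_zero_iff hS |>.mpr hS1)

lemma integral_cond_eq_inv_mul_setIntegral (S : Set Ω) :
    ∫ ω, W ω ∂η[|S] = (η.real S)⁻¹ * ∫ ω in S, W ω ∂η := by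
  rw [ProbabilityTheory.cond, integral_smul_measure, ENNReal.toReal_inv, smul_eq_mul,
    measureReal_def]

lemma sub_inv_mul_integral_max_le_integral_cond [IsFiniteMeasure η] (hW : Integrable W η)
    (hS0 : η S ≠ 0) (c : ℝ) :
    c - (η.real S)⁻¹ * ∫ ω, max (c - W ω) 0 ∂η ≤ ∫ ω, W ω ∂η[|S] := by
  have hs : 0 < η.real S := ENNReal.toReal_pos hS0 (measure_ne_top η S)
  have hg : Integrable (fun ω => max (c - W ω) 0) η := ((integrable_const c).sub hW).pos_part
  have hset : c * η.real S - ∫ ω, max (c - W ω) 0 ∂η ≤ ∫ ω in S, W ω ∂η :=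
    calc c * η.real S - ∫ ω, max (c - W ω) 0 ∂η
        ≤ ∫ ω in S, (c - max (c - W ω) 0) ∂η := by
          rw [integral_sub (integrable_const c) hg.integrableOn, setIntegral_const, smul_eq_mul]
          linarith [setIntegral_le_integral (s := S) hg (ae_of_all _ fun ω => le_max_right _ _)]
      _ ≤ ∫ ω in S, W ω ∂η :=
          integral_mono ((integrable_const c).sub hg).integrableOn hW.integrableOn fun ω => by
            simp only
            linarith [le_max_left (c - W ω) 0]
  rw [integral_cond_eq_inv_mul_setIntegral, ← sub_nonneg]
  have := mul_le_mul_of_nonneg_left (sub_nonneg.2 hset) (inv_nonneg.2 hs.le)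
  field_simp at this ⊢
  linarith

lemma integral_cond_le_add_inv_mul_integral_max [IsFiniteMeasure η] (hW : Integrable W η)
    (hS0 : η S ≠ 0) (c : ℝ) :
    ∫ ω, W ω ∂η[|S] ≤ c + (η.real S)⁻¹ * ∫ ω, max (W ω - c) 0 ∂η := by
  have := sub_inv_mul_integral_max_le_integral_cond hW.neg hS0 (-c)
  simp only [Pi.neg_apply, sub_neg_eq_add, neg_add_eq_sub, integral_neg] at this
  linarith

variable [IsProbabilityMeasure η] {γ : ℝ}

lemma lowerTrunc_cdfOf_le_integral_cond (hW : Integrable W η) (hS : MeasurableSet S)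
    (hγ0 : 0 < γ) (hγS : γ ≤ η.real S) : lowerTrunc (cdfOf η W) γ ≤ ∫ ω, W ω ∂η[|S] := by
  set μ := η.map W
  have : IsProbabilityMeasure μ := Measure.isProbabilityMeasure_map hW.aemeasurable
  have hμ : Integrable id μ :=
    (integrable_map_measure aestronglyMeasurable_id hW.aemeasurable).mpr hW
  have hS0 : η S ≠ 0 := fun h => by simp [measureReal_def, h] at hγS; linarith
  rw [lowerTrunc, cdfOf_eq_cdf_map hW.aemeasurable]
  -- `γ = 1` is treated apart: there `F⁻¹(γ)` may be the junk value `sInf ∅ = 0`.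
  rcases (hγS.trans measureReal_le_one).lt_or_eq with hγ1 | rfl
  · set c := quantileFn (cdf μ) γ
    have hg : 0 ≤ ∫ ω, max (c - W ω) 0 ∂η := integral_nonneg fun ω => le_max_right _ _
    rw [setIntegral_Ioc_quantileFn_cdf μ hμ hγ0 hγ1, integral_map hW.aemeasurable (by fun_prop)]
    calc γ⁻¹ * (γ * c - ∫ ω, max (c - W ω) 0 ∂η)
        = c - γ⁻¹ * ∫ ω, max (c - W ω) 0 ∂η := by field_simp
      _ ≤ c - (η.real S)⁻¹ * ∫ ω, max (c - W ω) 0 ∂η := by gcongr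
      _ ≤ ∫ ω, W ω ∂η[|S] := sub_inv_mul_integral_max_le_integral_cond hW hS0 c
  · rw [cond_eq_self_of_measureReal_eq_one hS (le_antisymm measureReal_le_one hγS), inv_one,
      one_mul, setIntegral_congr_set Ioo_ae_eq_Ioc.symm, integral_quantileFn_cdf,
      integral_map hW.aemeasurable (by fun_prop)]

lemma integral_cond_le_upperTrunc_cdfOf (hW : Integrable W η) (hS : MeasurableSet S)
    (hγ0 : 0 < γ) (hγS : γ ≤ η.real S) : ∫ ω, W ω ∂η[|S] ≤ upperTrunc (cdfOf η W) γ := by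
  set μ := η.map W
  have : IsProbabilityMeasure μ := Measure.isProbabilityMeasure_map hW.aemeasurable
  have hμ : Integrable id μ :=
    (integrable_map_measure aestronglyMeasurable_id hW.aemeasurable).mpr hW
  have hS0 : η S ≠ 0 := fun h => by simp [measureReal_def, h] at hγS; linarith
  rw [upperTrunc, cdfOf_eq_cdf_map hW.aemeasurable]
  rcases (hγS.trans measureReal_le_one).lt_or_eq with hγ1 | rfl
  · set c := quantileFn (cdf μ) (1 - γ)
    have hg : 0 ≤ ∫ ω, max (W ω - c) 0 ∂η := integral_nonneg fun ω => le_max_right _ _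
    rw [setIntegral_Ico_quantileFn_cdf μ hμ (by linarith) (by linarith),
      integral_map hW.aemeasurable (by fun_prop), sub_sub_cancel]
    calc ∫ ω, W ω ∂η[|S] ≤ c + (η.real S)⁻¹ * ∫ ω, max (W ω - c) 0 ∂η :=
          integral_cond_le_add_inv_mul_integral_max hW hS0 c
      _ ≤ c + γ⁻¹ * ∫ ω, max (W ω - c) 0 ∂η := by gcongr
      _ = γ⁻¹ * (γ * c + ∫ ω, max (W ω - c) 0 ∂η) := by field_simp
  · rw [cond_eq_self_of_measureReal_eq_one hS (le_antisymm measureReal_le_one hγS), inv_one,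
      one_mul, sub_self, setIntegral_congr_set Ioo_ae_eq_Ico.symm, integral_quantileFn_cdf,
      integral_map hW.aemeasurable (by fun_prop)]

end ConditionalMean

lemma MeasureTheory.Integrable.cond {Ω : Type*} [MeasurableSpace Ω] {μ : Measure Ω}
    {f : Ω → ℝ} (hf : Integrable f μ) (s : Set Ω) : Integrable f μ[|s] := by
  by_cases hs : μ s = 0
  · rw [cond_eq_zero_of_meas_eq_zero hs]
    exact integrable_zero_measure
  · exact hf.restrict.smul_measure (ENNReal.inv_ne_top.2 hs)

lemma ProbabilityTheory.Indep.cond_inter_apply {Ω : Type*} {m₁ m₂ mΩ : MeasurableSpace Ω}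
    {P : Measure Ω} [IsFiniteMeasure P] (h : Indep m₁ m₂ P) {A E C : Set Ω}
    (hA₁ : MeasurableSet[m₁] A) (hE₁ : MeasurableSet[m₁] E) (hC₂ : MeasurableSet[m₂] C)
    (hA : MeasurableSet A) (hC : MeasurableSet C) (hC0 : P C ≠ 0) :
    P[|A ∩ C] E = P[|A] E := by
  rw [Indep_iff] at h
  rw [cond_apply (hA.inter hC), cond_apply hA, inter_right_comm, h _ _ (hA₁.inter hE₁) hC₂,
    h _ _ hA₁ hC₂, ENNReal.mul_inv (Or.inr (measure_ne_top P C)) (Or.inr hC0),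
    mul_mul_mul_comm, ENNReal.inv_mul_cancel hC0 (measure_ne_top P C), mul_one]

section Model

variable {Ω : Type*} {K : ℕ} {Z D0 D1 : Ω → ℕ} {Y : ℕ → ℕ → Ω → ℝ} {z d : ℕ} {ω : Ω}

/-- The potential layer `D_z` (meaningful for `z ∈ {0, 1}`). -/
def potentialLayer (D0 D1 : Ω → ℕ) (z : ℕ) : Ω → ℕ := if z = 1 then D1 else D0

lemma Dreal_eq_potentialLayer (hZ : Z ω = z) (hz : z ≤ 1) :
    Dreal Z D0 D1 ω = potentialLayer D0 D1 z ω := by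
  interval_cases z <;> simp [Dreal, potentialLayer, hZ]

lemma Yreal_eq_of_Dreal_eq (hZ : Z ω = z) (hz : z ≤ 1) (hd : d ∈ Finset.Icc 1 K)
    (hD : Dreal Z D0 D1 ω = d) : Yreal K Z D0 D1 Y ω = Y z d ω := by
  rw [Yreal, Finset.sum_eq_single_of_mem d hd fun b _ hbd => by simp [hD, Ne.symm hbd], hD]
  interval_cases z <;> simp [hZ]

/-- `RCT P K Y D0 D1 Z` is by definition `Indep (rctSigma K Y D0 D1) (comap Z) P`. -/
abbrev rctSigma (K : ℕ) (Y : ℕ → ℕ → Ω → ℝ) (D0 D1 : Ω → ℕ) : MeasurableSpace Ω :=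
  (⨆ z ∈ ({0, 1} : Set ℕ), ⨆ d ∈ Set.Icc 1 K, MeasurableSpace.comap (Y z d) inferInstance)
    ⊔ MeasurableSpace.comap D0 inferInstance ⊔ MeasurableSpace.comap D1 inferInstance

lemma measurableSet_rctSigma_potentialLayer_eq (z d : ℕ) :
    MeasurableSet[rctSigma K Y D0 D1] {ω | potentialLayer D0 D1 z ω = d} := by
  unfold potentialLayer
  split_ifs
  · exact le_sup_right (α := MeasurableSpace Ω) _ ⟨{d}, measurableSet_singleton d, rfl⟩
  · exact (le_sup_right.trans le_sup_left : MeasurableSpace.comap D0 inferInstance ≤ _) _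
      ⟨{d}, measurableSet_singleton d, rfl⟩

lemma measurableSet_rctSigma_le (hz : z ≤ 1) (hd : d ∈ Finset.Icc 1 K) (w : ℝ) :
    MeasurableSet[rctSigma K Y D0 D1] {ω | Y z d ω ≤ w} := by
  have hz' : z ∈ ({0, 1} : Set ℕ) := by interval_cases z <;> simp
  have hle : MeasurableSpace.comap (Y z d) inferInstance ≤ rctSigma K Y D0 D1 := by
    refine le_trans ?_ (le_sup_left.trans le_sup_left)
    refine le_trans ?_ (le_biSup _ hz')
    exact le_biSup (fun d => MeasurableSpace.comap (Y z d) inferInstance)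
      (Set.mem_Icc.mpr (Finset.mem_Icc.mp hd))
  exact hle _ ⟨Iic w, measurableSet_Iic, rfl⟩

end Model

section Arms

variable {Ω : Type*} [MeasurableSpace Ω] {P : Measure Ω} {K : ℕ}
  {Z D0 D1 : Ω → ℕ} {Y : ℕ → ℕ → Ω → ℝ} {z d : ℕ}

lemma measurable_potentialLayer (hD0 : Measurable D0) (hD1 : Measurable D1) (z : ℕ) :
    Measurable (potentialLayer D0 D1 z) := by
  unfold potentialLayer
  split_ifs <;> assumption

lemma measure_ne_zero_of_propScore_pos (h : 0 < propScore P Z D0 D1 d z) :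
    P {ω | Z ω = z} ≠ 0 := fun h0 => by
  simp [propScore, cond_eq_zero_of_meas_eq_zero h0] at h

lemma propScore_eq_of_RCT [IsProbabilityMeasure P] (hRCT : RCT P K Y D0 D1 Z) (hZ : Measurable Z)
    (hz : z ≤ 1) (hC0 : P {ω | Z ω = z} ≠ 0) :
    propScore P Z D0 D1 d z = P.real {ω | potentialLayer D0 D1 z ω = d} := by
  have hC : MeasurableSet {ω | Z ω = z} := hZ (measurableSet_singleton z)
  have hset : {ω | Z ω = z} ∩ {ω | Dreal Z D0 D1 ω = d}
      = {ω | Z ω = z} ∩ {ω | potentialLayer D0 D1 z ω = d} := by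
    ext ω
    simp only [mem_inter_iff, mem_ofPred_eq, and_congr_right_iff]
    intro hZω
    rw [Dreal_eq_potentialLayer hZω hz]
  rw [propScore, cond_apply hC, hset, ← cond_apply hC, ← univ_inter {ω | Z ω = z},
    Indep.cond_inter_apply (m₁ := rctSigma K Y D0 D1) (C := {ω | Z ω = z}) hRCT MeasurableSet.univ
      (measurableSet_rctSigma_potentialLayer_eq z d) ⟨{z}, measurableSet_singleton z, rfl⟩
      MeasurableSet.univ hC hC0, cond_univ, measureReal_def]

lemma FYcond_eq_of_RCT [IsFiniteMeasure P] (hRCT : RCT P K Y D0 D1 Z) (hZ : Measurable Z)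
    (hD0 : Measurable D0) (hD1 : Measurable D1) (hz : z ≤ 1) (hd : d ∈ Finset.Icc 1 K)
    (hC0 : P {ω | Z ω = z} ≠ 0) :
    FYcond P K Z D0 D1 Y d z = cdfOf (P[|{ω | potentialLayer D0 D1 z ω = d}]) (Y z d) := by
  ext w
  have hC : MeasurableSet {ω | Z ω = z} := hZ (measurableSet_singleton z)
  have hB : MeasurableSet {ω | potentialLayer D0 D1 z ω = d} :=
    measurable_potentialLayer hD0 hD1 z (measurableSet_singleton d)
  have hcond : {ω | Dreal Z D0 D1 ω = d ∧ Z ω = z}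
      = {ω | potentialLayer D0 D1 z ω = d} ∩ {ω | Z ω = z} := by
    ext ω
    simp only [mem_inter_iff, mem_ofPred_eq, and_congr_left_iff]
    intro hZω
    rw [Dreal_eq_potentialLayer hZω hz]
  have hevent : ({ω | potentialLayer D0 D1 z ω = d} ∩ {ω | Z ω = z}) ∩ {ω | Yreal K Z D0 D1 Y ω ≤ w}
      = ({ω | potentialLayer D0 D1 z ω = d} ∩ {ω | Z ω = z}) ∩ {ω | Y z d ω ≤ w} := by
    ext ω
    simp only [mem_inter_iff, mem_ofPred_eq, and_congr_right_iff, and_imp]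
    intro hDω hZω
    rw [Yreal_eq_of_Dreal_eq hZω hz hd ((Dreal_eq_potentialLayer hZω hz).trans hDω)]
  rw [FYcond, cdfOf, cdfOf, hcond, cond_apply (hB.inter hC), hevent, ← cond_apply (hB.inter hC),
    Indep.cond_inter_apply (m₁ := rctSigma K Y D0 D1) (C := {ω | Z ω = z}) hRCT
      (measurableSet_rctSigma_potentialLayer_eq z d) (measurableSet_rctSigma_le hz hd w)
      ⟨{z}, measurableSet_singleton z, rfl⟩ hB hC hC0]


lemma pbar_le_of_mem_ThetaI {R : (ℕ × ℕ → ℝ) → Prop} {p : ℕ × ℕ → ℝ}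
    (hp : p ∈ ThetaI P K Z D0 D1 R) {t : ℕ × ℕ}
    (ht : t ∈ Finset.range (K + 1) ×ˢ Finset.range (K + 1)) :
    pbar P K Z D0 D1 R t ≤ p t :=
  csInf_le ⟨0, by rintro _ ⟨q, hq, rfl⟩; exact hq.1 t ht⟩ ⟨p, hp, rfl⟩

lemma truncated_means_bound_stayers [IsProbabilityMeasure P] (hRCT : RCT P K Y D0 D1 Z)
    (hZ : Measurable Z) (hD0 : Measurable D0) (hD1 : Measurable D1) (hz : z ≤ 1)
    (hd : d ∈ Finset.Icc 1 K) (hY : Integrable (Y z d) P) {p : ℝ} (hp : p ≤ P.real {ω | D0 ω = d ∧ D1 ω = d})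
    (hprop : 0 < propScore P Z D0 D1 d z) (hγ : 0 < p / propScore P Z D0 D1 d z) :
    lowerTrunc (FYcond P K Z D0 D1 Y d z) (p / propScore P Z D0 D1 d z)
        ≤ ∫ ω, Y z d ω ∂P[|{ω | D0 ω = d ∧ D1 ω = d}] ∧
      ∫ ω, Y z d ω ∂P[|{ω | D0 ω = d ∧ D1 ω = d}]
        ≤ upperTrunc (FYcond P K Z D0 D1 Y d z) (p / propScore P Z D0 D1 d z) := by
  have hC0 := measure_ne_zero_of_propScore_pos hprop
  rw [propScore_eq_of_RCT hRCT hZ hz hC0] at hprop hγ ⊢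
  set B := {ω | potentialLayer D0 D1 z ω = d}
  set S := {ω | D0 ω = d ∧ D1 ω = d}
  have hB : MeasurableSet B := measurable_potentialLayer hD0 hD1 z (measurableSet_singleton d)
  have hS : MeasurableSet S :=
    (hD0 (measurableSet_singleton d)).inter (hD1 (measurableSet_singleton d))
  have hSB : S ⊆ B := fun ω hω => by
    simp only [B, potentialLayer, mem_ofPred_eq]
    split_ifs
    exacts [hω.2, hω.1]
  have : IsProbabilityMeasure P[|B] :=
    cond_isProbabilityMeasure fun h => by simp [measureReal_def, h] at hprop
  have hγS : p / P.real B ≤ (P[|B]).real S := by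
    have : (P[|B]).real S = P.real S / P.real B := by
      simp only [measureReal_def, cond_apply hB, inter_eq_right.2 hSB, ENNReal.toReal_mul,
        ENNReal.toReal_inv, div_eq_inv_mul]
    rw [this]
    exact div_le_div_of_nonneg_right hp hprop.le
  have hcond : P[|B][|S] = P[|S] := by rw [cond_cond_eq_cond_inter hB hS, inter_eq_right.2 hSB]
  rw [FYcond_eq_of_RCT hRCT hZ hD0 hD1 hz hd hC0, ← hcond]
  exact ⟨lowerTrunc_cdfOf_le_integral_cond (hY.cond B) hS hγ hγS,
    integral_cond_le_upperTrunc_cdfOf (hY.cond B) hS hγ hγS⟩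

end Arms

theorem multilayered_bounds_stayers_general
    {Ω : Type*} [MeasurableSpace Ω] (P : Measure Ω) [IsProbabilityMeasure P]
    (K : ℕ)
    (Z D0 D1 : Ω → ℕ)
    (hZm : Measurable Z) (hD0m : Measurable D0) (hD1m : Measurable D1)
    (Y : ℕ → ℕ → Ω → ℝ)
    (hYint : ∀ z ≤ 1, ∀ d, 1 ≤ d → d ≤ K → Integrable (Y z d) P)
    (hRCT : RCT P K Y D0 D1 Z)
    (R : (ℕ × ℕ → ℝ) → Prop)
    (hTrue : (fun t : ℕ × ℕ => (P {ω | D0 ω = t.1 ∧ D1 ω = t.2}).toReal)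
        ∈ ThetaI P K Z D0 D1 R)
    (d : ℕ) (hd1 : 1 ≤ d) (hdK : d ≤ K)
    (hprop1 : 0 < propScore P Z D0 D1 d 1) (hprop0 : 0 < propScore P Z D0 D1 d 0)
    (hγ1 : 0 < pbar P K Z D0 D1 R (d, d) / propScore P Z D0 D1 d 1)
    (hγ0 : 0 < pbar P K Z D0 D1 R (d, d) / propScore P Z D0 D1 d 0) :
    (lowerTrunc (FYcond P K Z D0 D1 Y d 1)
          (pbar P K Z D0 D1 R (d, d) / propScore P Z D0 D1 d 1)
        - upperTrunc (FYcond P K Z D0 D1 Y d 0)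
          (pbar P K Z D0 D1 R (d, d) / propScore P Z D0 D1 d 0)
      ≤ ∫ ω, (Y 1 d ω - Y 0 d ω) ∂(P[|{ω | D0 ω = d ∧ D1 ω = d}]))
    ∧ (∫ ω, (Y 1 d ω - Y 0 d ω) ∂(P[|{ω | D0 ω = d ∧ D1 ω = d}])
      ≤ upperTrunc (FYcond P K Z D0 D1 Y d 1)
          (pbar P K Z D0 D1 R (d, d) / propScore P Z D0 D1 d 1)
        - lowerTrunc (FYcond P K Z D0 D1 Y d 0)
          (pbar P K Z D0 D1 R (d, d) / propScore P Z D0 D1 d 0)) := by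
  have hd : d ∈ Finset.Icc 1 K := Finset.mem_Icc.2 ⟨hd1, hdK⟩
  have hY1 := hYint 1 le_rfl d hd1 hdK
  have hY0 := hYint 0 zero_le_one d hd1 hdK
  have hp : pbar P K Z D0 D1 R (d, d) ≤ P.real {ω | D0 ω = d ∧ D1 ω = d} :=
    pbar_le_of_mem_ThetaI hTrue (by simp only [Finset.mem_product, Finset.mem_range]; omega)
  obtain ⟨hlow1, hup1⟩ :=
    truncated_means_bound_stayers hRCT hZm hD0m hD1m le_rfl hd hY1 hp hprop1 hγ1
  obtain ⟨hlow0, hup0⟩ :=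
    truncated_means_bound_stayers hRCT hZm hD0m hD1m zero_le_one hd hY0 hp hprop0 hγ0
  rw [integral_sub (hY1.cond _) (hY0.cond _)]
  exact ⟨by linarith, by linarith⟩

/-- validity of the multilayered bounds for stayers: under
Assumption RCT, if the true response-type probability vector lies in
`Θ_I(R)`, then the local controlled direct effect for the stayers at layer `d`
is bounded by the corresponding truncated means. -/
theorem multilayered_bounds_stayers
    {Ω : Type*} [MeasurableSpace Ω] (P : Measure Ω) [IsProbabilityMeasure P]
    (K : ℕ) (hK : 1 ≤ K)
    (Z D0 D1 : Ω → ℕ)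
    (hZm : Measurable Z) (hD0m : Measurable D0) (hD1m : Measurable D1)
    (hZ01 : ∀ ω, Z ω ≤ 1) (hD0K : ∀ ω, D0 ω ≤ K) (hD1K : ∀ ω, D1 ω ≤ K)
    (hZpos : 0 < P {ω | Z ω = 1}) (hZlt : P {ω | Z ω = 1} < 1)
    (Y : ℕ → ℕ → Ω → ℝ)
    (hYm : ∀ z ≤ 1, ∀ d, 1 ≤ d → d ≤ K → Measurable (Y z d))
    (hYint : ∀ z ≤ 1, ∀ d, 1 ≤ d → d ≤ K → Integrable (Y z d) P)
    (hRCT : RCT P K Y D0 D1 Z)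
    (R : (ℕ × ℕ → ℝ) → Prop)
    (hTrue : (fun t : ℕ × ℕ => (P {ω | D0 ω = t.1 ∧ D1 ω = t.2}).toReal)
        ∈ ThetaI P K Z D0 D1 R)
    (d : ℕ) (hd1 : 1 ≤ d) (hdK : d ≤ K)
    (hTdd : 0 < P {ω | D0 ω = d ∧ D1 ω = d})
    (hprop1 : 0 < propScore P Z D0 D1 d 1) (hprop0 : 0 < propScore P Z D0 D1 d 0)
    (hγ1 : 0 < pbar P K Z D0 D1 R (d, d) / propScore P Z D0 D1 d 1)
    (hγ0 : 0 < pbar P K Z D0 D1 R (d, d) / propScore P Z D0 D1 d 0) :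
    (lowerTrunc (FYcond P K Z D0 D1 Y d 1)
          (pbar P K Z D0 D1 R (d, d) / propScore P Z D0 D1 d 1)
        - upperTrunc (FYcond P K Z D0 D1 Y d 0)
          (pbar P K Z D0 D1 R (d, d) / propScore P Z D0 D1 d 0)
      ≤ ∫ ω, (Y 1 d ω - Y 0 d ω) ∂(P[|{ω | D0 ω = d ∧ D1 ω = d}]))
    ∧ (∫ ω, (Y 1 d ω - Y 0 d ω) ∂(P[|{ω | D0 ω = d ∧ D1 ω = d}])
      ≤ upperTrunc (FYcond P K Z D0 D1 Y d 1)
          (pbar P K Z D0 D1 R (d, d) / propScore P Z D0 D1 d 1)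
        - lowerTrunc (FYcond P K Z D0 D1 Y d 0)
          (pbar P K Z D0 D1 R (d, d) / propScore P Z D0 D1 d 0)) :=
  multilayered_bounds_stayers_general P K Z D0 D1 hZm hD0m hD1m Y hYint hRCT R hTrue d hd1 hdK
    hprop1 hprop0 hγ1 hγ0
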